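/- Let x = (I−B)⁻¹ e with B_{S,S̄} = 0 and I − B invertible, and suppose the residual r = x_{S̄} − A_{S̄,S} A_S⁻¹ x_S where A = (I−B)⁻¹. Then r = (I_{S̄} − B_{S̄})⁻¹ e_{S̄}, i.e., r satisfies the GroupLiNGAM equation r = B_{S̄} r + e_{S̄}. -/
import Mathlib

open Matrix

/-- If `x = (I - B)⁻¹ e` with the `S × S̄` block of `B` zero and `I - B` invertible, then
the residual `r = x_{S̄} - A_{S̄,S} A_S⁻¹ x_S` (where `A = (I - B)⁻¹`) satisfies
`r = (I_{S̄} - B_{S̄})⁻¹ e_{S̄}`, i.e. the GroupLiNGAM equation `r = B_{S̄} r + e_{S̄}`. -/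
theorem residual_groupLingam {p : ℕ} (S : Finset (Fin p))
    (B : Matrix (Fin p) (Fin p) ℝ)
    (hzero : ∀ i j : Fin p, i ∈ S → j ∉ S → B i j = 0)
    (hinv : IsUnit (1 - B))
    (A : Matrix (Fin p) (Fin p) ℝ) (hA : A = (1 - B)⁻¹)
    (e x : Fin p → ℝ) (hx : x = A.mulVec e)
    (r : {j // j ∉ S} → ℝ)
    (hr : r = (fun j : {j // j ∉ S} => x j.1)
        - ((A.submatrix (fun i : {i // i ∉ S} => i.1) (fun j : {j // j ∈ S} => j.1)) *
            (A.submatrix (fun i : {i // i ∈ S} => i.1) (fun j : {j // j ∈ S} => j.1))⁻¹).mulVec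
          (fun i : {i // i ∈ S} => x i.1)) :
    r = (1 - B.submatrix (fun i : {i // i ∉ S} => i.1) (fun j : {j // j ∉ S} => j.1))⁻¹.mulVec
          (fun j : {j // j ∉ S} => e j.1)
    ∧ r = (B.submatrix (fun i : {i // i ∉ S} => i.1) (fun j : {j // j ∉ S} => j.1)).mulVec r
          + fun j : {j // j ∉ S} => e j.1 := by
  classical
  -- Notation
  set M : Matrix (Fin p) (Fin p) ℝ := 1 - B with hM
  have hdet : IsUnit M.det := (Matrix.isUnit_iff_isUnit_det _).mp hinv
  have hMA : M * A = 1 := by rw [hA]; exact Matrix.mul_nonsing_inv _ hdet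
  have hAM : A * M = 1 := by rw [hA]; exact Matrix.nonsing_inv_mul _ hdet
  have hMzero : ∀ i j : Fin p, i ∈ S → j ∉ S → M i j = 0 := by
    intro i j hi hj
    have hne : i ≠ j := fun h => hj (h ▸ hi)
    simp [hM, Matrix.sub_apply, Matrix.one_apply_ne hne, hzero i j hi hj]
  have hsplit : ∀ f : Fin p → ℝ, (∑ k, f k) =
      (∑ k : {k // k ∈ S}, f k.1) + ∑ k : {k // k ∉ S}, f k.1 := by
    intro f
    rw [← Finset.sum_filter_add_sum_filter_not Finset.univ (· ∈ S) f]
    congr 1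
    · exact Finset.sum_subtype _ (by simp) f
    · exact Finset.sum_subtype _ (by simp) f
  set cs : {i : Fin p // i ∈ S} → Fin p := fun i => i.1 with hcs
  set cc : {i : Fin p // i ∉ S} → Fin p := fun i => i.1 with hcc
  set MS := M.submatrix cs cs
  set MCS := M.submatrix cc cs
  set MCC := M.submatrix cc cc
  set AS := A.submatrix cs cs
  set ASC := A.submatrix cs cc
  set ACS := A.submatrix cc cs
  set ACC := A.submatrix cc cc
  -- one_submatrix facts
  have hone_s : (1 : Matrix (Fin p) (Fin p) ℝ).submatrix cs cs = 1 := by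
    ext i j
    by_cases h : i = j
    · simp [h, Matrix.one_apply]
    · have : cs i ≠ cs j := fun hc => h (Subtype.ext hc)
      simp [Matrix.one_apply_ne this, Matrix.one_apply_ne h]
  have hone_c : (1 : Matrix (Fin p) (Fin p) ℝ).submatrix cc cc = 1 := by
    ext i j
    by_cases h : i = j
    · simp [h, Matrix.one_apply]
    · have : cc i ≠ cc j := fun hc => h (Subtype.ext hc)
      simp [Matrix.one_apply_ne this, Matrix.one_apply_ne h]
  -- MS * AS = 1
  have h1 : MS * AS = 1 := by
    ext i j
    have h : (M * A) i.1 j.1 = (1 : Matrix (Fin p) (Fin p) ℝ) i.1 j.1 := by rw [hMA]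
    rw [Matrix.mul_apply, hsplit] at h
    have hz : (∑ k : {k // k ∉ S}, M i.1 k.1 * A k.1 j.1) = 0 := by
      apply Finset.sum_eq_zero
      intro k _
      rw [hMzero i.1 k.1 i.2 k.2, zero_mul]
    rw [hz, add_zero] at h
    rw [Matrix.mul_apply]
    have hrhs : (1 : Matrix (Fin p) (Fin p) ℝ) i.1 j.1
        = (1 : Matrix {i // i ∈ S} {i // i ∈ S} ℝ) i j := by
      by_cases hij : i = j
      · simp [hij, Matrix.one_apply]
      · have : i.1 ≠ j.1 := fun hc => hij (Subtype.ext hc)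
        simp [Matrix.one_apply_ne this, Matrix.one_apply_ne hij]
    rw [← hrhs, ← h]
    rfl
  have h1' : AS * MS = 1 := mul_eq_one_comm.mp h1
  have hASinv : AS⁻¹ = MS := Matrix.inv_eq_right_inv h1'
  -- ASC = 0
  have hASC : ASC = 0 := by
    have h2 : MS * ASC = 0 := by
      ext i j
      have h : (M * A) i.1 j.1 = (1 : Matrix (Fin p) (Fin p) ℝ) i.1 j.1 := by rw [hMA]
      rw [Matrix.mul_apply, hsplit] at h
      have hz : (∑ k : {k // k ∉ S}, M i.1 k.1 * A k.1 j.1) = 0 := by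
        apply Finset.sum_eq_zero
        intro k _
        rw [hMzero i.1 k.1 i.2 k.2, zero_mul]
      rw [hz, add_zero] at h
      have hne : i.1 ≠ j.1 := fun hc => j.2 (hc ▸ i.2)
      rw [Matrix.one_apply_ne hne] at h
      rw [Matrix.mul_apply]
      rw [show (0 : Matrix {i // i ∈ S} {i // i ∉ S} ℝ) i j = 0 from rfl, ← h]
      rfl
    calc ASC = (AS * MS) * ASC := by rw [h1', Matrix.one_mul]
    _ = AS * (MS * ASC) := by rw [Matrix.mul_assoc]
    _ = 0 := by rw [h2, Matrix.mul_zero]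
  -- ACC * MCC = 1
  have h3 : ACC * MCC = 1 := by
    ext i j
    have h : (A * M) i.1 j.1 = (1 : Matrix (Fin p) (Fin p) ℝ) i.1 j.1 := by rw [hAM]
    rw [Matrix.mul_apply, hsplit] at h
    have hz : (∑ k : {k // k ∈ S}, A i.1 k.1 * M k.1 j.1) = 0 := by
      apply Finset.sum_eq_zero
      intro k _
      rw [hMzero k.1 j.1 k.2 j.2, mul_zero]
    rw [hz, zero_add] at h
    rw [Matrix.mul_apply]
    have hrhs : (1 : Matrix (Fin p) (Fin p) ℝ) i.1 j.1
        = (1 : Matrix {i // i ∉ S} {i // i ∉ S} ℝ) i j := by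
      by_cases hij : i = j
      · simp [hij, Matrix.one_apply]
      · have : i.1 ≠ j.1 := fun hc => hij (Subtype.ext hc)
        simp [Matrix.one_apply_ne this, Matrix.one_apply_ne hij]
    rw [← hrhs, ← h]
    rfl
  have h3' : MCC * ACC = 1 := mul_eq_one_comm.mp h3
  have hMCCinv : MCC⁻¹ = ACC := Matrix.inv_eq_left_inv h3
  -- MCC in terms of B
  have hMCC_eq : MCC = 1 - B.submatrix cc cc := by
    have : MCC = (1 : Matrix (Fin p) (Fin p) ℝ).submatrix cc cc - B.submatrix cc cc := rfl
    rw [this, hone_c]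
  -- vector blocks
  set eS : {i // i ∈ S} → ℝ := fun i => e i.1
  set eC : {i // i ∉ S} → ℝ := fun i => e i.1
  have hxS : (fun i : {i // i ∈ S} => x i.1) = AS.mulVec eS := by
    funext i
    rw [hx]
    show (∑ k, A i.1 k * e k) = _
    rw [hsplit]
    have hz : (∑ k : {k // k ∉ S}, A i.1 k.1 * e k.1) = 0 := by
      apply Finset.sum_eq_zero
      intro k _
      have : A i.1 k.1 = 0 := congrFun (congrFun hASC i) k
      rw [this, zero_mul]
    rw [hz, add_zero]
    rfl
  have hxC : (fun j : {j // j ∉ S} => x j.1) = ACS.mulVec eS + ACC.mulVec eC := by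
    funext j
    rw [hx]
    show (∑ k, A j.1 k * e k) = _
    rw [hsplit]
    rfl
  -- compute r
  have hr2 : r = ACC.mulVec eC := by
    rw [hr, hxS, hxC, hASinv]
    funext j
    have : MS.mulVec (AS.mulVec eS) = eS := by
      rw [Matrix.mulVec_mulVec, h1, Matrix.one_mulVec]
    rw [show ((ACS * MS).mulVec (AS.mulVec eS)) = ACS.mulVec eS by
      rw [← Matrix.mulVec_mulVec, this]]
    simp
  constructor
  · rw [hr2, ← hMCC_eq, hMCCinv]
  · rw [hr2]
    have h4 : MCC.mulVec (ACC.mulVec eC) = eC := by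
      rw [Matrix.mulVec_mulVec, h3', Matrix.one_mulVec]
    rw [hMCC_eq] at h4
    rw [Matrix.sub_mulVec, Matrix.one_mulVec] at h4
    funext j
    have := congrFun h4 j
    have h5 : ACC.mulVec eC j - (B.submatrix cc cc).mulVec (ACC.mulVec eC) j = eC j := this
    simp only [Pi.add_apply]
    linarith
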